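/- Let p be a prime with gcd(3,p) = 1 and p^m ≡ 2 (mod 3), and let δ ∈ R^t be a unit that is a cube in R^t, say δ = δ̃³ with δ̃ ∈ R^t. Then δ̃ is a unit of R^t, x^{3p^s} − δ = (x^{p^s} − δ̃)(x^{2p^s} + δ̃x^{p^s} + δ̃²) in R^t[x], and there is a ring isomorphism R^{t,3}_δ = R^t[x]/⟨x^{3p^s} − δ⟩ ≅ R^t[x]/⟨x^{p^s} − δ̃⟩ × R^t[x]/⟨x^{2p^s} + δ̃x^{p^s} + δ̃²⟩. -/

import Mathlib

open Polynomial

/-- The finite chain ring `R^t = 𝔽_{p^m}[u]/⟨u^t⟩`. -/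
abbrev Rt (p m t : ℕ) [Fact p.Prime] : Type _ :=
  Polynomial (GaloisField p m) ⧸ Ideal.span {(X : Polynomial (GaloisField p m)) ^ t}

noncomputable instance Rt.instCommRing (p m t : ℕ) [Fact p.Prime] : CommRing (Rt p m t) :=
  Ideal.Quotient.commRing _

/-- The canonical projection `𝔽_{p^m}[u] → R^t`. -/
noncomputable def mkRt (p m t : ℕ) [Fact p.Prime] :
    Polynomial (GaloisField p m) →+* Rt p m t :=
  Ideal.Quotient.mk _

/-- The element `u ∈ R^t`. -/
noncomputable def uRt (p m t : ℕ) [Fact p.Prime] : Rt p m t := mkRt p m t X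

/-- The canonical embedding `𝔽_{p^m} → R^t`. -/
noncomputable def κ (p m t : ℕ) [Fact p.Prime] : GaloisField p m →+* Rt p m t :=
  (mkRt p m t).comp (C : GaloisField p m →+* Polynomial (GaloisField p m))

/-- The quotient ring `R^t[x]/⟨x^N − δ⟩`. -/
abbrev Qr (p m t : ℕ) [Fact p.Prime] (N : ℕ) (δ : Rt p m t) : Type _ :=
  Polynomial (Rt p m t) ⧸ Ideal.span {(X : Polynomial (Rt p m t)) ^ N - C δ}

/-- The canonical projection `R^t[x] → R^t[x]/⟨x^N − δ⟩`. -/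
noncomputable def mkQr (p m t : ℕ) [Fact p.Prime] (N : ℕ) (δ : Rt p m t) :
    Polynomial (Rt p m t) →+* Qr p m t N δ :=
  Ideal.Quotient.mk _

/-!
Over any commutative ring, `y³ - a³ = (y - a)(y² + ay + a²)`, and the two factors are coprime
as soon as `3a²` is a unit, since `-(y + 2a)(y - a) + (y² + ay + a²) = 3a²`. In `R^t` the cube
root `δ̃` of the unit `δ` is a unit and `3` is invertible because `p ≠ 3`, so with `y = x^{p^s}`
the Chinese remainder theorem splits `R^t[x]/⟨x^{3p^s} − δ⟩`.
-/

section CubeFactorization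

variable {A : Type*} [CommRing A]

theorem isCoprime_sub_sq_add_mul_add_sq {y a : A} (ha : IsUnit (3 * a ^ 2)) :
    IsCoprime (y - a) (y ^ 2 + a * y + a ^ 2) := by
  obtain ⟨v, hv⟩ := ha.exists_right_inv
  refine ⟨-v * (y + 2 * a), v, ?_⟩
  linear_combination hv

noncomputable def Ideal.quotientSpanMulEquivProd {f g : A} (h : IsCoprime f g) :
    A ⧸ Ideal.span {f * g} ≃+* (A ⧸ Ideal.span {f}) × (A ⧸ Ideal.span {g}) :=
  (Ideal.quotEquivOfEq (Ideal.span_singleton_mul_span_singleton f g).symm).trans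
    (Ideal.quotientMulEquivQuotientProd _ _ ((Ideal.isCoprime_span_singleton_iff f g).mpr h))

theorem Polynomial.X_pow_three_mul_sub_C_pow_three (n : ℕ) (a : A) :
    (X : A[X]) ^ (3 * n) - C (a ^ 3) =
      (X ^ n - C a) * (X ^ (2 * n) + C a * X ^ n + C (a ^ 2)) := by
  simp only [map_pow]
  ring

theorem Polynomial.isCoprime_X_pow_sub_C_cube_cofactor {a : A} (ha : IsUnit (3 * a ^ 2))
    (n : ℕ) :
    IsCoprime ((X : A[X]) ^ n - C a) (X ^ (2 * n) + C a * X ^ n + C (a ^ 2)) := by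
  have hCa : IsUnit (3 * C a ^ 2 : A[X]) := by
    simpa only [map_mul, map_pow, map_ofNat] using ha.map (C : A →+* A[X])
  simpa [pow_mul'] using isCoprime_sub_sq_add_mul_add_sq (y := (X : A[X]) ^ n) hCa

end CubeFactorization

theorem isUnit_three_Rt {p : ℕ} [Fact p.Prime] (m t : ℕ) (hp : p ≠ 3) :
    IsUnit (3 : Rt p m t) := by
  have hp3 : ¬ p ∣ 3 := fun h =>
    hp ((Nat.prime_dvd_prime_iff_eq Fact.out Nat.prime_three).mp h)
  have h3F : (3 : GaloisField p m) ≠ 0 := fun h0 =>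
    hp3 ((CharP.cast_eq_zero_iff (GaloisField p m) p 3).mp (by exact_mod_cast h0))
  simpa only [map_ofNat] using (isUnit_iff_ne_zero.mpr h3F).map (κ p m t)

theorem stmt_17_general (p m s t : ℕ) [Fact p.Prime] (hp : p ≠ 3)
    (δt : Rt p m t) (hδ : IsUnit (δt ^ 3)) :
    IsUnit δt ∧
    (X : Polynomial (Rt p m t)) ^ (3 * p ^ s) - C (δt ^ 3) =
      (X ^ p ^ s - C δt) * (X ^ (2 * p ^ s) + C δt * X ^ p ^ s + C (δt ^ 2)) ∧
    Nonempty (Qr p m t (3 * p ^ s) (δt ^ 3) ≃+*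
      Qr p m t (p ^ s) δt ×
      (Polynomial (Rt p m t) ⧸
        Ideal.span {(X : Polynomial (Rt p m t)) ^ (2 * p ^ s) +
          C δt * X ^ p ^ s + C (δt ^ 2)})) := by
  have hunit : IsUnit δt := (isUnit_pow_iff three_ne_zero).mp hδ
  have hfactor := X_pow_three_mul_sub_C_pow_three (p ^ s) δt
  have hcop :=
    isCoprime_X_pow_sub_C_cube_cofactor ((isUnit_three_Rt m t hp).mul (hunit.pow 2)) (p ^ s)
  exact ⟨hunit, hfactor,
    ⟨(Ideal.quotEquivOfEq (by rw [hfactor])).trans (Ideal.quotientSpanMulEquivProd hcop)⟩⟩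

/-- Let `p` be a prime with `gcd(3,p) = 1` and `p^m ≡ 2 (mod 3)`, and let
`δ ∈ R^t` be a unit that is a cube, say `δ = δ̃³`.  Then `δ̃` is a unit,
`x^{3p^s} − δ = (x^{p^s} − δ̃)(x^{2p^s} + δ̃x^{p^s} + δ̃²)` in `R^t[x]`, and
`R^{t,3}_δ ≅ R^t[x]/⟨x^{p^s} − δ̃⟩ × R^t[x]/⟨x^{2p^s} + δ̃x^{p^s} + δ̃²⟩`. -/
theorem stmt_17 (p m s t : ℕ) [Fact p.Prime] (hp : p ≠ 3) (hm : m ≠ 0) (ht : 1 ≤ t)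
    (hmod : p ^ m % 3 = 2)
    (δt : Rt p m t) (hδ : IsUnit (δt ^ 3)) :
    IsUnit δt ∧
    (X : Polynomial (Rt p m t)) ^ (3 * p ^ s) - C (δt ^ 3) =
      (X ^ p ^ s - C δt) * (X ^ (2 * p ^ s) + C δt * X ^ p ^ s + C (δt ^ 2)) ∧
    Nonempty (Qr p m t (3 * p ^ s) (δt ^ 3) ≃+*
      Qr p m t (p ^ s) δt ×
      (Polynomial (Rt p m t) ⧸
        Ideal.span {(X : Polynomial (Rt p m t)) ^ (2 * p ^ s) +
          C δt * X ^ p ^ s + C (δt ^ 2)})) :=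
  stmt_17_general p m s t hp δt hδ
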